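/- Define, for a symmetric positive definite matrix-valued function S(x,α) and probability measure π, the quasi-entropy Ỹ(α) := (1/2)·( ∫ log|S^{-1}(x,α)S(x,α₀)| π(dx) − d·log( (1/d)·∫ tr(S^{-1}(x,α)S(x,α₀)) π(dx) ) ). Then Ỹ(α) ≤ 0 for every α, and Ỹ(α) = 0 if and only if the eigenvalues λ₁(x,α), …, λ_d(x,α) of S^{-1}(x,α)S(x,α₀) are π-a.e. constant in x and all equal to each other. -/

import Mathlib

open Matrix MeasureTheory

/-! Write `M(x) = S(x,α)⁻¹ S(x,α₀)`. It is similar to the positive definite matrix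
`R S(x,α₀) R` with `R = √(S(x,α)⁻¹)`, so its eigenvalues are positive, and concavity of `log`
(AM–GM) gives `log det M ≤ d · log (tr M / d)`, with equality only if `M` is scalar.
Integrating the tangent line `log y ≤ log m + (y / m - 1)` at the mean `m = ∫ tr M / d` is
Jensen's inequality `∫ log (tr M / d) ≤ log m`, with equality only if `tr M / d = m` a.e.
Equality in `Ỹ ≤ 0` forces equality in both steps, i.e. `S(x,α₀) = m · S(x,α)` a.e. -/

namespace Real

variable {ι : Type*} [Fintype ι] [Nonempty ι]

theorem sum_log_le_card_mul_log_mean {p : ι → ℝ} (hp : ∀ i, 0 < p i) :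
    ∑ i, log (p i) ≤ Fintype.card ι * log ((∑ i, p i) / Fintype.card ι) := by
  have hN : (0 : ℝ) < Fintype.card ι := Nat.cast_pos.mpr Fintype.card_pos
  have := strictConcaveOn_log_Ioi.concaveOn.le_map_sum (t := Finset.univ)
    (w := fun _ => (Fintype.card ι : ℝ)⁻¹) (p := p) (fun _ _ => by positivity)
    (by simp [Finset.card_univ, hN.ne']) (fun i _ => hp i)
  simp only [smul_eq_mul, ← Finset.mul_sum] at this
  rw [inv_mul_eq_div, inv_mul_eq_div, div_le_iff₀' hN] at this
  exact this

theorem eq_mean_of_sum_log_eq {p : ι → ℝ} (hp : ∀ i, 0 < p i)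
    (h : ∑ i, log (p i) = Fintype.card ι * log ((∑ i, p i) / Fintype.card ι)) (j : ι) :
    p j = (∑ i, p i) / Fintype.card ι := by
  have hN : (0 : ℝ) < Fintype.card ι := Nat.cast_pos.mpr Fintype.card_pos
  have hconst := strictConcaveOn_log_Ioi.eq_of_map_sum_eq (t := Finset.univ)
    (w := fun _ => (Fintype.card ι : ℝ)⁻¹) (p := p) (fun _ _ => by positivity)
    (by simp [Finset.card_univ, hN.ne']) (fun i _ => hp i) (by
      simp only [smul_eq_mul, ← Finset.mul_sum]
      rw [inv_mul_eq_div, inv_mul_eq_div, le_div_iff₀' hN, h])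
  rw [eq_div_iff hN.ne', Finset.sum_congr rfl fun i _ => hconst (Finset.mem_univ i)
    (Finset.mem_univ j)]
  simp [mul_comm]

theorem log_le_log_add_div_sub_one {y m : ℝ} (hy : 0 < y) (hm : 0 < m) :
    log y ≤ log m + (y / m - 1) := by
  have := log_le_sub_one_of_pos (div_pos hy hm)
  rw [log_div hy.ne' hm.ne'] at this
  linarith

theorem eq_of_log_eq_log_add_div_sub_one {y m : ℝ} (hy : 0 < y) (hm : 0 < m)
    (h : log y = log m + (y / m - 1)) : y = m := by
  by_contra hne
  have := log_lt_sub_one_of_pos (div_pos hy hm) (by rwa [Ne, div_eq_one_iff_eq hm.ne'])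
  rw [log_div hy.ne' hm.ne'] at this
  linarith

end Real

namespace Matrix

variable {n : Type*} [Fintype n] [DecidableEq n] {A B C : Matrix n n ℝ}

theorem IsHermitian.eq_smul_one_of_eigenvalues_eq (hC : C.IsHermitian) {c : ℝ}
    (h : ∀ i, hC.eigenvalues i = c) : C = c • 1 := by
  have hdiag : diagonal (RCLike.ofReal ∘ hC.eigenvalues) = c • (1 : Matrix n n ℝ) := by
    rw [smul_one_eq_diagonal]
    exact congrArg diagonal (funext h)
  rw [hC.spectral_theorem, Unitary.conjStarAlgAut_apply, hdiag, mul_smul_comm, smul_mul_assoc,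
    Matrix.mul_one, (Matrix.mem_unitaryGroup_iff).mp hC.eigenvectorUnitary.2]

theorem PosDef.log_det_eq_sum_log_eigenvalues (hC : C.PosDef) :
    Real.log C.det = ∑ i, Real.log (hC.1.eigenvalues i) := by
  rw [hC.1.det_eq_prod_eigenvalues]
  exact Real.log_prod fun i _ => (hC.eigenvalues_pos i).ne'

theorem IsHermitian.trace_eq_sum_eigenvalues_real (hC : C.IsHermitian) :
    C.trace = ∑ i, hC.eigenvalues i := by
  simpa using hC.trace_eq_sum_eigenvalues

open scoped MatrixOrder in
theorem PosDef.exists_conj_eq_inv_mul (hA : A.PosDef) (hB : B.PosDef) :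
    ∃ R C : Matrix n n ℝ, IsUnit R ∧ C.PosDef ∧ A⁻¹ * B = R * C * R⁻¹ := by
  have hR : (CFC.sqrt A⁻¹).PosDef := (hA.inv.isStrictlyPositive.sqrt).posDef
  set R := CFC.sqrt A⁻¹
  have hRR : R * R = A⁻¹ := CFC.sqrt_mul_sqrt_self A⁻¹ hA.inv.posSemidef.nonneg
  refine ⟨R, Rᴴ * B * R, hR.isUnit, hB.conjTranspose_mul_mul_same
    (mulVec_injective_iff_isUnit.mpr hR.isUnit), ?_⟩
  rw [hR.1.eq, ← hRR, Matrix.mul_assoc, Matrix.mul_assoc, Matrix.mul_assoc,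
    mul_nonsing_inv _ ((isUnit_iff_isUnit_det R).mp hR.isUnit), Matrix.mul_one]

variable [Nonempty n]

theorem PosDef.log_det_le (hC : C.PosDef) :
    Real.log C.det ≤ Fintype.card n * Real.log (C.trace / Fintype.card n) := by
  rw [hC.log_det_eq_sum_log_eigenvalues, hC.1.trace_eq_sum_eigenvalues_real]
  exact Real.sum_log_le_card_mul_log_mean hC.eigenvalues_pos

theorem PosDef.eq_smul_one_of_log_det_eq (hC : C.PosDef)
    (h : Real.log C.det = Fintype.card n * Real.log (C.trace / Fintype.card n)) :
    C = (C.trace / Fintype.card n) • 1 := by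
  rw [hC.log_det_eq_sum_log_eigenvalues, hC.1.trace_eq_sum_eigenvalues_real] at h
  rw [hC.1.trace_eq_sum_eigenvalues_real]
  exact hC.1.eq_smul_one_of_eigenvalues_eq (Real.eq_mean_of_sum_log_eq hC.eigenvalues_pos h)

theorem PosDef.trace_inv_mul_pos (hA : A.PosDef) (hB : B.PosDef) : 0 < (A⁻¹ * B).trace := by
  obtain ⟨R, C, hR, hC, hM⟩ := hA.exists_conj_eq_inv_mul hB
  rw [hM, trace_conj hR]
  exact hC.trace_pos

theorem PosDef.log_det_inv_mul_le (hA : A.PosDef) (hB : B.PosDef) :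
    Real.log (A⁻¹ * B).det ≤ Fintype.card n * Real.log ((A⁻¹ * B).trace / Fintype.card n) := by
  obtain ⟨R, C, hR, hC, hM⟩ := hA.exists_conj_eq_inv_mul hB
  rw [hM, det_conj hR, trace_conj hR]
  exact hC.log_det_le

theorem PosDef.eq_smul_of_log_det_inv_mul_eq (hA : A.PosDef) (hB : B.PosDef)
    (h : Real.log (A⁻¹ * B).det = Fintype.card n * Real.log ((A⁻¹ * B).trace / Fintype.card n)) :
    B = ((A⁻¹ * B).trace / Fintype.card n) • A := by
  obtain ⟨R, C, hR, hC, hM⟩ := hA.exists_conj_eq_inv_mul hB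
  rw [hM, det_conj hR, trace_conj hR] at h
  set m := C.trace / Fintype.card n
  have hAB : A⁻¹ * B = m • 1 := by
    rw [hM, hC.eq_smul_one_of_log_det_eq h, mul_smul_comm, Matrix.mul_one, smul_mul_assoc,
      mul_nonsing_inv _ ((isUnit_iff_isUnit_det R).mp hR)]
  rw [hM, trace_conj hR]
  calc B = A * (A⁻¹ * B) :=
        (mul_nonsing_inv_cancel_left _ _ ((isUnit_iff_isUnit_det A).mp hA.isUnit)).symm
    _ = m • A := by rw [hAB, mul_smul_comm, Matrix.mul_one]

end Matrix

section Integral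

variable {α : Type*} [MeasurableSpace α] {μ : Measure α} {u : α → ℝ}

theorem integral_pos_of_ae_pos [NeZero μ] (hu : ∀ᵐ x ∂μ, 0 < u x) (hui : Integrable u μ) :
    0 < ∫ x, u x ∂μ := by
  rw [integral_pos_iff_support_of_nonneg_ae (hu.mono fun x hx => hx.le) hui]
  refine pos_iff_ne_zero.2 fun h => ?_
  obtain ⟨x, hx, hpos⟩ := ((measure_eq_zero_iff_ae_notMem.1 h).and hu).exists
  exact hx hpos.ne'

variable [IsProbabilityMeasure μ]

theorem integrable_log_integral_add_div_integral_sub_one (hui : Integrable u μ) :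
    Integrable (fun x => Real.log (∫ y, u y ∂μ) + (u x / ∫ y, u y ∂μ - 1)) μ :=
  (integrable_const _).add ((hui.div_const _).sub (integrable_const 1))

theorem integral_log_integral_add_div_integral_sub_one (hui : Integrable u μ)
    (hu : ∫ x, u x ∂μ ≠ 0) :
    ∫ x, (Real.log (∫ y, u y ∂μ) + (u x / ∫ y, u y ∂μ - 1)) ∂μ = Real.log (∫ y, u y ∂μ) := by
  have hi : Integrable (fun x => u x / ∫ y, u y ∂μ - 1) μ :=
    (hui.div_const _).sub (integrable_const 1)
  rw [integral_add (integrable_const _) hi, integral_sub (hui.div_const _) (integrable_const 1),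
    integral_div, integral_const,
    integral_const, probReal_univ, one_smul, one_smul, div_self hu, sub_self, add_zero]

section LogTangent

variable (hu : ∀ᵐ x ∂μ, 0 < u x) (hui : Integrable u μ)
  (hlog : Integrable (fun x => Real.log (u x)) μ)

include hu hui

theorem log_ae_le_tangent_at_integral :
    (fun x => Real.log (u x)) ≤ᵐ[μ]
      fun x => Real.log (∫ y, u y ∂μ) + (u x / ∫ y, u y ∂μ - 1) :=
  hu.mono fun _ hx => Real.log_le_log_add_div_sub_one hx (integral_pos_of_ae_pos hu hui)

include hlog

theorem integral_log_le_log_integral :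
    ∫ x, Real.log (u x) ∂μ ≤ Real.log (∫ x, u x ∂μ) :=
  (integral_mono_ae hlog (integrable_log_integral_add_div_integral_sub_one hui)
    (log_ae_le_tangent_at_integral hu hui)).trans_eq
    (integral_log_integral_add_div_integral_sub_one hui (integral_pos_of_ae_pos hu hui).ne')

theorem ae_eq_integral_of_integral_log_eq
    (h : ∫ x, Real.log (u x) ∂μ = Real.log (∫ x, u x ∂μ)) :
    ∀ᵐ x ∂μ, u x = ∫ y, u y ∂μ := by
  have hm := integral_pos_of_ae_pos hu hui
  have htangent := (integral_eq_iff_of_ae_le hlog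
    (integrable_log_integral_add_div_integral_sub_one hui)
    (log_ae_le_tangent_at_integral hu hui)).1
    (h.trans (integral_log_integral_add_div_integral_sub_one hui hm.ne').symm)
  filter_upwards [hu, htangent] with x hx hx'
  exact Real.eq_of_log_eq_log_add_div_sub_one hx hm hx'

end LogTangent

section LogMeanBound

variable {f : α → ℝ} {k : ℝ} (hk : 0 < k) (hu : ∀ᵐ x ∂μ, 0 < u x)
  (hfu : ∀ᵐ x ∂μ, f x ≤ k * Real.log (u x)) (hfi : Integrable f μ) (hui : Integrable u μ)

include hk hu hfu hfi hui

theorem integrable_log_of_le_mul_log : Integrable (fun x => Real.log (u x)) μ :=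
  integrable_of_le_of_le (g₁ := fun x => f x / k) (g₂ := fun x => u x - 1)
    (Real.measurable_log.comp_aemeasurable hui.aemeasurable).aestronglyMeasurable
    (hfu.mono fun _ hx => by rwa [div_le_iff₀' hk])
    (hu.mono fun _ hx => Real.log_le_sub_one_of_pos hx) (hfi.div_const k)
    (hui.sub (integrable_const 1))

theorem integral_le_mul_log_integral : ∫ x, f x ∂μ ≤ k * Real.log (∫ x, u x ∂μ) := by
  have hlog := integrable_log_of_le_mul_log hk hu hfu hfi hui
  calc ∫ x, f x ∂μ ≤ ∫ x, k * Real.log (u x) ∂μ := integral_mono_ae hfi (hlog.const_mul k) hfu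
    _ = k * ∫ x, Real.log (u x) ∂μ := integral_const_mul k _
    _ ≤ k * Real.log (∫ x, u x ∂μ) :=
      mul_le_mul_of_nonneg_left (integral_log_le_log_integral hu hui hlog) hk.le

theorem ae_eq_of_integral_eq_mul_log_integral (h : ∫ x, f x ∂μ = k * Real.log (∫ x, u x ∂μ)) :
    (f =ᵐ[μ] fun x => k * Real.log (u x)) ∧ ∀ᵐ x ∂μ, u x = ∫ y, u y ∂μ := by
  have hlog := integrable_log_of_le_mul_log hk hu hfu hfi hui
  have hf_le : ∫ x, f x ∂μ ≤ k * ∫ x, Real.log (u x) ∂μ := by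
    rw [← integral_const_mul]
    exact integral_mono_ae hfi (hlog.const_mul k) hfu
  have hjensen : ∫ x, Real.log (u x) ∂μ = Real.log (∫ x, u x ∂μ) :=
    (integral_log_le_log_integral hu hui hlog).antisymm (le_of_mul_le_mul_left (h ▸ hf_le) hk)
  refine ⟨(integral_eq_iff_of_ae_le hfi (hlog.const_mul k) hfu).1 ?_,
    ae_eq_integral_of_integral_log_eq hu hui hlog hjensen⟩
  rw [integral_const_mul, hjensen, h]

end LogMeanBound

end Integral

/-- The quasi-entropy
`Ỹ(α) = (1/2)(∫ log|S(x,α)⁻¹S(x,α₀)| dπ − d·log((1/d)∫ tr(S(x,α)⁻¹S(x,α₀)) dπ))`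
satisfies `Ỹ(α) ≤ 0`, with equality iff the eigenvalues of `S(x,α)⁻¹S(x,α₀)` are
π-a.e. constant in `x` and all equal (i.e. `S(x,α₀) = c·S(x,α)` π-a.e. for a
constant `c > 0`). -/
theorem stmt_14 {d : ℕ} (hd : 0 < d) {A : Type*} (a₀ : A)
    (π : Measure (Fin d → ℝ)) [IsProbabilityMeasure π]
    (S : A → (Fin d → ℝ) → Matrix (Fin d) (Fin d) ℝ)
    (hpd : ∀ a x, (S a x).PosDef)
    (hint1 : ∀ a, Integrable (fun x => Real.log ((S a x)⁻¹ * S a₀ x).det) π)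
    (hint2 : ∀ a, Integrable (fun x => ((S a x)⁻¹ * S a₀ x).trace) π)
    (a : A) :
    let Y : ℝ := (1 / 2) *
      ((∫ x, Real.log ((S a x)⁻¹ * S a₀ x).det ∂π) -
        (d : ℝ) * Real.log ((1 / (d : ℝ)) * ∫ x, ((S a x)⁻¹ * S a₀ x).trace ∂π))
    Y ≤ 0 ∧ (Y = 0 ↔ ∃ c : ℝ, 0 < c ∧ ∀ᵐ x ∂π, S a₀ x = c • S a x) := by
  intro Y
  have hd_pos : (0 : ℝ) < d := Nat.cast_pos.mpr hd
  have : Nonempty (Fin d) := Fin.pos_iff_nonempty.mp hd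
  set u : (Fin d → ℝ) → ℝ := fun x => ((S a x)⁻¹ * S a₀ x).trace / d
  have hu : ∀ x, 0 < u x := fun x => div_pos ((hpd a x).trace_inv_mul_pos (hpd a₀ x)) hd_pos
  have hfu : ∀ x, Real.log ((S a x)⁻¹ * S a₀ x).det ≤ d * Real.log (u x) := fun x => by
    simpa using (hpd a x).log_det_inv_mul_le (hpd a₀ x)
  have hui : Integrable u π := (hint2 a).div_const _
  have hY : Y = (1 / 2) * ((∫ x, Real.log ((S a x)⁻¹ * S a₀ x).det ∂π) -
      d * Real.log (∫ x, u x ∂π)) := by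
    simp only [Y, u, integral_div, one_div_mul_eq_div]
  have hle := integral_le_mul_log_integral hd_pos (ae_of_all _ hu) (ae_of_all _ hfu) (hint1 a) hui
  refine ⟨by rw [hY]; linarith, fun hY0 => ?_, ?_⟩
  · obtain ⟨hf, hconst⟩ := ae_eq_of_integral_eq_mul_log_integral hd_pos (ae_of_all _ hu)
      (ae_of_all _ hfu) (hint1 a) hui (by rw [hY] at hY0; linarith)
    refine ⟨∫ x, u x ∂π, integral_pos_of_ae_pos (ae_of_all _ hu) hui, ?_⟩
    filter_upwards [hf, hconst] with x hfx hux
    rw [← hux]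
    simpa using (hpd a x).eq_smul_of_log_det_inv_mul_eq (hpd a₀ x) (by simpa using hfx)
  · rintro ⟨c, -, hS⟩
    have hM : ∀ᵐ x ∂π, (S a x)⁻¹ * S a₀ x = c • 1 := hS.mono fun x hx => by
      rw [hx, Matrix.mul_smul, nonsing_inv_mul _ ((isUnit_iff_isUnit_det _).mp (hpd a x).isUnit)]
    have hf : (fun x => Real.log ((S a x)⁻¹ * S a₀ x).det) =ᵐ[π] fun _ => d * Real.log c :=
      hM.mono fun x hx => by simp [hx, Real.log_pow]
    have hu_const : u =ᵐ[π] fun _ => c := hM.mono fun x hx => by simp [u, hx, hd_pos.ne']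
    rw [hY, integral_congr_ae hf, integral_congr_ae hu_const]
    simp
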